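/- arXiv:1601.05034 — 11 statements merged into one kernel-verified Lean document; each statement's English description precedes it below -/
import Mathlib

section
/- Let R be a finite commutative ring with nonzero identity, let n ≥ 1, and let a = (a_1,…,a_n) ∈ R^n be a vertex of TD(R,n) such that a_i is invertible in R for some i. Then the degree of a in TD(R,n) equals |R|^{n-1} − 1 if ‖a‖ ≠ 0, and equals |R|^{n-1} − 2 if ‖a‖ = 0. -/
/-
Dotting with `a` is an additive map `R^n → R`, and it is surjective because some coordinate
of `a` is a unit. Its kernel therefore has `|R|^n / |R| = |R|^(n-1)` elements. The neighbours
of `a` are the kernel elements other than `0` and `a` itself; `0` always lies in the kernel,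
while `a` lies in it exactly when `‖a‖ = a ⬝ᵥ a = 0`.
-/

open SimpleGraph

/-- The total dot product graph `TD(R,n)`: vertices are the nonzero vectors of `R^n`,
and two distinct vertices are adjacent iff their dot product is `0`. -/
def TD (R : Type*) [CommRing R] (n : ℕ) :
    SimpleGraph {x : Fin n → R // x ≠ 0} where
  Adj a b := a ≠ b ∧ ∑ i, a.1 i * b.1 i = 0
  symm := by
    constructor
    intro a b ⟨hne, h⟩
    exact ⟨hne.symm, by simpa [mul_comm] using h⟩
  loopless := by
    constructor
    intro a ⟨hne, _⟩
    exact hne rfl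

section DotProduct

variable {ι R : Type*} [Fintype ι] [CommRing R]

theorem dotProduct_surjective_of_isUnit {v : ι → R} {i : ι} (hi : IsUnit (v i)) :
    Function.Surjective (v ⬝ᵥ ·) := by
  classical
  intro r
  refine ⟨Pi.single i (hi.unit⁻¹ * r), ?_⟩
  simp [dotProduct_single, ← mul_assoc]

theorem ncard_setOf_dotProduct_eq_zero [Finite R] {v : ι → R} {i : ι} (hi : IsUnit (v i)) :
    {x | v ⬝ᵥ x = 0}.ncard = Nat.card R ^ (Fintype.card ι - 1) := by
  have : Nonempty ι := ⟨i⟩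
  let f : (ι → R) →+ R := AddMonoidHom.mk' (v ⬝ᵥ ·) (dotProduct_add v)
  have hrange : Nat.card f.range = Nat.card R := by
    rw [AddMonoidHom.range_eq_top.mpr (dotProduct_surjective_of_isUnit hi)]
    exact Nat.card_congr AddSubgroup.topEquiv.toEquiv
  have hker := f.ker.card_mul_index
  rw [AddSubgroup.index_ker, hrange, Nat.card_fun, Nat.card_eq_fintype_card (α := ι),
    ← Nat.sub_one_add_one (Fintype.card_ne_zero (α := ι)), pow_succ] at hker
  rw [← Nat.card_coe_set_eq]
  exact Nat.eq_of_mul_eq_mul_right Nat.card_pos hker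

end DotProduct

theorem TD.card_neighborSet {R : Type*} [CommRing R] {n : ℕ} (a : {x : Fin n → R // x ≠ 0}) :
    Nat.card ((TD R n).neighborSet a) = (({x | a.1 ⬝ᵥ x = 0} \ {0}) \ {a.1}).ncard := by
  rw [← Nat.card_coe_set_eq]
  exact Nat.card_congr
    { toFun := fun b => ⟨b.1.1, ⟨b.2.2, b.1.2⟩, fun h => b.2.1 (Subtype.ext h.symm)⟩
      invFun := fun x => ⟨⟨x.1, x.2.1.2⟩, fun h => x.2.2 (congrArg Subtype.val h).symm, x.2.1.1⟩
      left_inv := fun _ => rfl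
      right_inv := fun _ => rfl }

theorem stmt0_general (R : Type*) [CommRing R] [Fintype R]
    (n : ℕ) (a : {x : Fin n → R // x ≠ 0})
    (ha : ∃ i, IsUnit (a.1 i)) :
    (∑ i, a.1 i ^ 2 ≠ 0 →
      Nat.card ((TD R n).neighborSet a) = Fintype.card R ^ (n - 1) - 1) ∧
    (∑ i, a.1 i ^ 2 = 0 →
      Nat.card ((TD R n).neighborSet a) = Fintype.card R ^ (n - 1) - 2) := by
  obtain ⟨i, hi⟩ := ha
  set S := {x | a.1 ⬝ᵥ x = 0}
  have hS : S.ncard = Fintype.card R ^ (n - 1) := by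
    rw [ncard_setOf_dotProduct_eq_zero hi, Fintype.card_fin, Nat.card_eq_fintype_card]
  have hzero : (0 : Fin n → R) ∈ S := dotProduct_zero a.1
  have hnorm : a.1 ∈ S ↔ ∑ i, a.1 i ^ 2 = 0 := by
    simp only [S, Set.mem_ofPred_eq, dotProduct, sq]
  rw [TD.card_neighborSet, ← hS]
  refine ⟨fun hne => ?_, fun heq => ?_⟩
  · rw [Set.sdiff_singleton_eq_self fun h => hne (hnorm.1 h.1),
      Set.ncard_sdiff_singleton_of_mem hzero]
  · have hmem : a.1 ∈ S \ {0} := ⟨hnorm.2 heq, a.2⟩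
    rw [Set.ncard_sdiff_singleton_of_mem hmem, Set.ncard_sdiff_singleton_of_mem hzero, Nat.sub_sub]

/-- if some coordinate of a vertex `a` of `TD(R,n)` is invertible, then the
degree of `a` is `|R|^(n-1) - 1` when `‖a‖ ≠ 0`, and `|R|^(n-1) - 2` when `‖a‖ = 0`. -/
theorem stmt0 (R : Type*) [CommRing R] [Fintype R] [Nontrivial R]
    (n : ℕ) (hn : 1 ≤ n) (a : {x : Fin n → R // x ≠ 0})
    (ha : ∃ i, IsUnit (a.1 i)) :
    (∑ i, a.1 i ^ 2 ≠ 0 →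
      Nat.card ((TD R n).neighborSet a) = Fintype.card R ^ (n - 1) - 1) ∧
    (∑ i, a.1 i ^ 2 = 0 →
      Nat.card ((TD R n).neighborSet a) = Fintype.card R ^ (n - 1) - 2) :=
  stmt0_general R n a ha
end

section
/- Let F be a finite field with q elements such that q ≡ 3 (mod 4). Then TD(F,2) is a regular graph of valency q − 1, i.e. every vertex of TD(F,2) has degree q − 1. -/
open SimpleGraph

/-!
The vectors orthogonal to a nonzero `v ∈ F^n` form the kernel of the surjective functional
`w ↦ v ⬝ᵥ w`, so there are `q^(n-1)` of them. When `q ≡ 3 (mod 4)`, `-1` is not a square in `F`,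
so `a² + b² = 0` forces `a = b = 0`: no nonzero vector of `F²` is self-orthogonal. Hence the
neighbours of `v` in `TD(F,2)` are exactly the `q - 1` nonzero vectors of the line orthogonal to `v`.
-/

theorem ncard_setOf_dotProduct_eq_zero_s1 {F ι : Type*} [Field F] [Finite F] [Fintype ι]
    {v : ι → F} (hv : v ≠ 0) :
    {w : ι → F | v ⬝ᵥ w = 0}.ncard = Nat.card F ^ (Fintype.card ι - 1) := by
  let f := dotProductBilin F F v
  have hsurj : Function.Surjective f := by
    classical
    obtain ⟨i, hi⟩ := Function.ne_iff.mp hv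
    intro c
    exact ⟨Pi.single i (c / v i), by simp [f, dotProduct_single, mul_div_cancel₀ _ hi]⟩
  have hker : Module.finrank F (LinearMap.ker f) = Fintype.card ι - 1 := by
    have := LinearMap.finrank_range_add_finrank_ker f
    rw [LinearMap.range_eq_top.mpr hsurj, finrank_top, Module.finrank_self,
      Module.finrank_fintype_fun_eq_card] at this
    omega
  rw [← hker, ← Module.natCard_eq_pow_finrank, ← Nat.card_coe_set_eq]
  rfl

theorem dotProduct_self_ne_zero_of_not_isSquare_neg_one {F : Type*} [Field F]
    (h : ¬IsSquare (-1 : F)) {v : Fin 2 → F} (hv : v ≠ 0) : v ⬝ᵥ v ≠ 0 := by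
  intro hvv
  rw [dotProduct, Fin.sum_univ_two] at hvv
  apply hv
  by_cases h1 : v 1 = 0
  · have h0 : v 0 = 0 := by simpa [h1] using hvv
    ext i
    fin_cases i <;> simp [h0, h1]
  · refine absurd ⟨v 0 / v 1, ?_⟩ h
    field_simp
    linear_combination -hvv

theorem TD.natCard_neighborSet_of_dotProduct_self_ne_zero {F : Type*} [Field F] [Finite F]
    {n : ℕ} (v : {x : Fin n → F // x ≠ 0}) (hv : v.1 ⬝ᵥ v.1 ≠ 0) :
    Nat.card ((TD F n).neighborSet v) = Nat.card F ^ (n - 1) - 1 := by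
  have himage : Subtype.val '' (TD F n).neighborSet v = {w | v.1 ⬝ᵥ w = 0} \ {0} := by
    ext w
    constructor
    · rintro ⟨u, ⟨-, hu⟩, rfl⟩
      exact ⟨hu, u.2⟩
    · rintro ⟨hw, hw0⟩
      refine ⟨⟨w, hw0⟩, ⟨?_, hw⟩, rfl⟩
      rintro rfl
      exact hv hw
  rw [Nat.card_coe_set_eq, ← Set.ncard_image_of_injective _ Subtype.val_injective, himage,
    Set.ncard_sdiff_singleton_of_mem (by simp), ncard_setOf_dotProduct_eq_zero_s1 v.2,
    Fintype.card_fin]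

/-- if `F` is a finite field with `q ≡ 3 (mod 4)` elements, then `TD(F,2)` is
a regular graph of valency `q - 1`. -/
theorem stmt1 (F : Type*) [Field F] [Fintype F]
    (hq : Fintype.card F % 4 = 3)
    (v : {x : Fin 2 → F // x ≠ 0}) :
    Nat.card ((TD F 2).neighborSet v) = Fintype.card F - 1 := by
  have hneg : ¬IsSquare (-1 : F) := by
    rw [FiniteField.isSquare_neg_one_iff]
    omega
  rw [TD.natCard_neighborSet_of_dotProduct_self_ne_zero v
      (dotProduct_self_ne_zero_of_not_isSquare_neg_one hneg v.2),
    Nat.card_eq_fintype_card, pow_one]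
end

section
/- Let F be a finite field with q elements such that the equation x² + y² = 0 has only the trivial solution x = y = 0 in F. Then TD(F,2) is disconnected and has exactly (q+1)/2 connected components, each of which has exactly 2(q−1) vertices. -/
/-!
In `F²` the orthogonal complement of a nonzero `v` is the line spanned by its rotation
`(-v₁, v₀)`, and rotating twice gives `-v`. Hence every walk from `v` stays in the union of the
line through `v` and its perpendicular line; conversely, since no nonzero vector is
self-orthogonal, each nonzero point of that cross is a neighbour of `v` or of its rotation.
The two lines meet only in `0`, so every component has `2(q - 1)` vertices, and the `q² - 1`
vertices split into `(q + 1) / 2` components.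
-/

open SimpleGraph

theorem SimpleGraph.card_eq_card_connectedComponent_mul {V : Type*} [Finite V]
    (G : SimpleGraph V) {k : ℕ} (hk : ∀ c : G.ConnectedComponent, c.supp.ncard = k) :
    Nat.card V = Nat.card G.ConnectedComponent * k := by
  have := Fintype.ofFinite G.ConnectedComponent
  calc Nat.card V = ∑ c, Nat.card {v // G.connectedComponentMk v = c} := by
        rw [← Nat.card_sigma, Nat.card_congr (Equiv.sigmaFiberEquiv _)]
    _ = ∑ _c : G.ConnectedComponent, k :=
        Finset.sum_congr rfl fun c _ => (Nat.card_coe_set_eq c.supp).trans (hk c)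
    _ = Nat.card G.ConnectedComponent * k := by simp [Nat.card_eq_fintype_card]

theorem Nat.card_subtype_ne_add_one {α : Type*} [Finite α] (a : α) :
    Nat.card {x // x ≠ a} + 1 = Nat.card α := by
  rw [← Set.ncard_add_ncard_compl {a}, Set.ncard_singleton, add_comm]
  rfl

section rot90

variable {R : Type*} [CommRing R]

def rot90 (v : Fin 2 → R) : Fin 2 → R := ![-v 1, v 0]

@[simp]
theorem rot90_apply_zero (v : Fin 2 → R) : rot90 v 0 = -v 1 := rfl

@[simp]
theorem rot90_apply_one (v : Fin 2 → R) : rot90 v 1 = v 0 := rfl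

theorem rot90_smul (c : R) (v : Fin 2 → R) : rot90 (c • v) = c • rot90 v := by
  ext i; fin_cases i <;> simp [rot90]

theorem rot90_rot90 (v : Fin 2 → R) : rot90 (rot90 v) = -v := by
  ext i; fin_cases i <;> simp [rot90]

theorem rot90_eq_zero_iff {v : Fin 2 → R} : rot90 v = 0 ↔ v = 0 := by
  simp [rot90, funext_iff, Fin.forall_fin_two, and_comm]

theorem dotProduct_rot90_self (v : Fin 2 → R) : v ⬝ᵥ rot90 v = 0 := by
  rw [dotProduct, Fin.sum_univ_two, rot90_apply_zero, rot90_apply_one]; ring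

theorem rot90_dotProduct_self (v : Fin 2 → R) : rot90 v ⬝ᵥ v = 0 := by
  rw [dotProduct_comm, dotProduct_rot90_self]

theorem eq_zero_of_dotProduct_self_eq_zero_of_sq_add_sq
    (h : ∀ x y : R, x ^ 2 + y ^ 2 = 0 → x = 0 ∧ y = 0) {v : Fin 2 → R} (hv : v ⬝ᵥ v = 0) :
    v = 0 := by
  have := h (v 0) (v 1) (by simpa [dotProduct, Fin.sum_univ_two, sq] using hv)
  ext i; fin_cases i <;> simp [this]

theorem exists_eq_smul_rot90_of_dotProduct_eq_zero {F : Type*} [Field F] {v w : Fin 2 → F}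
    (hv : v ≠ 0) (hvw : v ⬝ᵥ w = 0) : ∃ c : F, w = c • rot90 v := by
  rw [dotProduct, Fin.sum_univ_two] at hvw
  by_cases hv0 : v 0 = 0
  · have hv1 : v 1 ≠ 0 := fun hv1 => hv (by ext i; fin_cases i <;> simp [hv0, hv1])
    have hw1 : w 1 = 0 := by simpa [hv0, hv1] using hvw
    refine ⟨-w 0 / v 1, funext <| Fin.forall_fin_two.2 ⟨?_, ?_⟩⟩ <;>
      simp [hv0, hw1, hv1]
  · refine ⟨w 1 / v 0, funext <| Fin.forall_fin_two.2 ⟨?_, ?_⟩⟩ <;>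
      simp only [Pi.smul_apply, rot90_apply_zero, rot90_apply_one, smul_eq_mul] <;> field_simp
    linear_combination hvw

def perpCross (v : Fin 2 → R) : Set (Fin 2 → R) :=
  Set.range (fun c : R => c • v) ∪ Set.range (fun c : R => c • rot90 v)

theorem ncard_perpCross_diff_zero {F : Type*} [Field F] [Finite F]
    {v : Fin 2 → F} (hv : v ⬝ᵥ v ≠ 0) : (perpCross v \ {0}).ncard = 2 * (Nat.card F - 1) := by
  have hv₀ : v ≠ 0 := by rintro rfl; simp at hv
  have hline := Set.ncard_range_of_injective (smul_left_injective F hv₀)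
  have hline' := Set.ncard_range_of_injective (smul_left_injective F (rot90_eq_zero_iff.not.2 hv₀))
  have hinter : Set.range (fun c : F => c • v) ∩ Set.range (fun c : F => c • rot90 v) = {0} := by
    refine Set.eq_singleton_iff_unique_mem.2 ⟨⟨⟨0, zero_smul F v⟩, ⟨0, zero_smul F _⟩⟩, ?_⟩
    rintro _ ⟨⟨c, rfl⟩, ⟨d, hdc⟩⟩
    have : c * (v ⬝ᵥ v) = 0 := by
      simpa only [dotProduct_smul, dotProduct_rot90_self, smul_eq_mul, mul_zero]
        using congrArg (v ⬝ᵥ ·) hdc.symm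
    simp [(mul_eq_zero.1 this).resolve_right hv]
  have hunion := Set.ncard_union_add_ncard_inter
    (Set.range (fun c : F => c • v)) (Set.range (fun c : F => c • rot90 v))
  rw [hinter, Set.ncard_singleton, hline, hline'] at hunion
  have hq : 0 < Nat.card F := Nat.card_pos
  rw [Set.ncard_sdiff_singleton_of_mem (show (0 : Fin 2 → F) ∈ perpCross v from
    Or.inl ⟨0, zero_smul F v⟩), perpCross]
  omega

end rot90

namespace TD

theorem adj_iff_of_anisotropic {R : Type*} [CommRing R] {n : ℕ}
    (hR : ∀ v : Fin n → R, v ⬝ᵥ v = 0 → v = 0) {a b : {x : Fin n → R // x ≠ 0}} :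
    (TD R n).Adj a b ↔ a.1 ⬝ᵥ b.1 = 0 :=
  ⟨And.right, fun hab => ⟨by rintro rfl; exact a.2 (hR _ hab), hab⟩⟩

variable {F : Type*} [Field F]

theorem mem_perpCross_of_reachable {a b : {x : Fin 2 → F // x ≠ 0}}
    (hab : (TD F 2).Reachable a b) : b.1 ∈ perpCross a.1 := by
  rw [reachable_iff_reflTransGen] at hab
  induction hab with
  | refl => exact Or.inl ⟨1, one_smul F _⟩
  | @tail x y _ hxy ih =>
    obtain ⟨d, hd⟩ := exists_eq_smul_rot90_of_dotProduct_eq_zero x.2 hxy.2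
    rcases ih with ⟨c, hc⟩ | ⟨c, hc⟩
    · exact Or.inr ⟨d * c, by rw [hd, ← hc, rot90_smul, smul_smul]⟩
    · exact Or.inl ⟨-(d * c), by rw [hd, ← hc, rot90_smul, rot90_rot90]; module⟩

theorem reachable_of_mem_perpCross (hF : ∀ v : Fin 2 → F, v ⬝ᵥ v = 0 → v = 0)
    {a b : {x : Fin 2 → F // x ≠ 0}} (hb : b.1 ∈ perpCross a.1) : (TD F 2).Reachable a b := by
  rcases hb with ⟨c, hc⟩ | ⟨c, hc⟩
  · let r : {x : Fin 2 → F // x ≠ 0} := ⟨rot90 a.1, rot90_eq_zero_iff.not.2 a.2⟩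
    have har : (TD F 2).Adj a r := (adj_iff_of_anisotropic hF).2 (dotProduct_rot90_self a.1)
    have hrb : (TD F 2).Adj r b := (adj_iff_of_anisotropic hF).2 <| by
      rw [← hc, dotProduct_smul, rot90_dotProduct_self, smul_zero]
    exact har.reachable.trans hrb.reachable
  · exact ((adj_iff_of_anisotropic hF).2 <| by
      rw [← hc, dotProduct_smul, dotProduct_rot90_self, smul_zero]).reachable

theorem ncard_supp [Finite F] (hF : ∀ v : Fin 2 → F, v ⬝ᵥ v = 0 → v = 0)
    (c : (TD F 2).ConnectedComponent) : c.supp.ncard = 2 * (Nat.card F - 1) := by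
  refine c.ind fun a => ?_
  have hsupp : ((TD F 2).connectedComponentMk a).supp = Subtype.val ⁻¹' perpCross a.1 := by
    ext b
    rw [ConnectedComponent.mem_supp_iff, ConnectedComponent.eq, reachable_comm]
    exact ⟨mem_perpCross_of_reachable, reachable_of_mem_perpCross hF⟩
  rw [hsupp, ← Set.ncard_image_of_injective _ Subtype.val_injective,
    Set.image_preimage_eq_range_inter, Subtype.range_coe_subtype, Set.inter_comm]
  exact ncard_perpCross_diff_zero fun h => a.2 (hF _ h)

theorem two_mul_card_connectedComponent [Finite F]
    (hF : ∀ v : Fin 2 → F, v ⬝ᵥ v = 0 → v = 0) :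
    2 * Nat.card (TD F 2).ConnectedComponent = Nat.card F + 1 := by
  have hsum := (TD F 2).card_eq_card_connectedComponent_mul (ncard_supp hF)
  have hV := Nat.card_subtype_ne_add_one (0 : Fin 2 → F)
  rw [Nat.card_fun, Nat.card_fin, hsum] at hV
  have hq : 1 < Nat.card F := Finite.one_lt_card
  apply Nat.eq_of_mul_eq_mul_right (Nat.sub_pos_of_lt hq)
  zify [hq.le] at hV ⊢
  linear_combination hV

end TD

/-- if `x² + y² = 0` has only the trivial solution in a finite field `F` with
`q` elements, then `TD(F,2)` is disconnected with exactly `(q+1)/2` connected components,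
each of which has exactly `2(q-1)` vertices. -/
theorem stmt3 (F : Type*) [Field F] [Fintype F]
    (h : ∀ x y : F, x ^ 2 + y ^ 2 = 0 → x = 0 ∧ y = 0) :
    ¬ (TD F 2).Connected ∧
    2 * Nat.card ((TD F 2).ConnectedComponent) = Fintype.card F + 1 ∧
    ∀ c : (TD F 2).ConnectedComponent, c.supp.ncard = 2 * (Fintype.card F - 1) := by
  have hF : ∀ v : Fin 2 → F, v ⬝ᵥ v = 0 → v = 0 := fun v =>
    eq_zero_of_dotProduct_self_eq_zero_of_sq_add_sq h
  have hcount := TD.two_mul_card_connectedComponent hF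
  rw [Nat.card_eq_fintype_card (α := F)] at hcount
  refine ⟨fun hconn => ?_, hcount, fun c => ?_⟩
  · have := Finite.card_le_one_iff_subsingleton.2 hconn.preconnected.subsingleton_connectedComponent
    have := Fintype.one_lt_card (α := F)
    omega
  · rw [TD.ncard_supp hF, Nat.card_eq_fintype_card]
end

section
/- Let F and E be finite fields and let m, n ≥ 1 be integers. If the graphs TD(F,n) and TD(E,m) are isomorphic, then n = m and |F| = |E| (hence F and E are isomorphic as fields). -/
open SimpleGraph

/-!
A graph isomorphism preserves the number of vertices and the maximum degree. In `TD(F,n)` with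
`|F| = q` there are `q ^ n - 1` vertices; the neighbours of `v` are the nonzero vectors of the
hyperplane `v⊥` other than `v` itself, so every degree is at most `q ^ (n - 1) - 1`, with equality
for any `v` with `v ⬝ᵥ v ≠ 0`, such as a standard basis vector. The two numbers `q ^ n` and
`q ^ (n - 1)` determine `q` (their quotient) and then `n`.
-/

open Module

theorem Nat.card_subtype_ne {α : Type*} [Finite α] [DecidableEq α] (a : α) :
    Nat.card {x // x ≠ a} = Nat.card α - 1 := by
  rw [← Nat.card_congr (Equiv.optionSubtypeNe a), Finite.card_option, Nat.add_sub_cancel]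

theorem Nat.eq_and_eq_of_pow_succ_eq_of_pow_eq {q p a b : ℕ} (hp : 2 ≤ p)
    (h : q ^ (a + 1) = p ^ (b + 1)) (h' : q ^ a = p ^ b) : q = p ∧ a = b := by
  rw [pow_succ, pow_succ, h'] at h
  have hqp : q = p := Nat.eq_of_mul_eq_mul_left (by positivity) h
  subst hqp
  exact ⟨rfl, Nat.pow_right_injective hp h'⟩

theorem Module.Dual.natCard_ker_of_ne_zero {K V : Type*} [Field K] [Finite K] [AddCommGroup V]
    [Module K V] [Module.Finite K V] {f : Dual K V} (hf : f ≠ 0) :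
    Nat.card (LinearMap.ker f) = Nat.card K ^ (finrank K V - 1) := by
  rw [natCard_eq_pow_finrank (K := K), ← f.finrank_ker_add_one_of_ne_zero hf, Nat.add_sub_cancel]

theorem SimpleGraph.Iso.range_card_neighborSet_eq {V W : Type*} {G : SimpleGraph V}
    {H : SimpleGraph W} (e : G ≃g H) :
    Set.range (fun v ↦ Nat.card (G.neighborSet v)) =
      Set.range (fun w ↦ Nat.card (H.neighborSet w)) := by
  rw [← e.surjective.range_comp]
  exact congrArg Set.range (funext fun v ↦ Nat.card_congr (e.mapNeighborSet v))

theorem image_val_neighborSet_TD {R : Type*} [CommRing R] {n : ℕ}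
    (v : {x : Fin n → R // x ≠ 0}) :
    Subtype.val '' (TD R n).neighborSet v = {y | v.1 ⬝ᵥ y = 0} \ {0, v.1} := by
  ext y
  constructor
  · rintro ⟨w, ⟨hwv, hdot⟩, rfl⟩
    refine ⟨hdot, ?_⟩
    rintro (h | h)
    exacts [w.2 h, hwv (Subtype.ext h.symm)]
  · rintro ⟨hdot, hy⟩
    simp only [Set.mem_insert_iff, Set.mem_singleton_iff, not_or] at hy
    exact ⟨⟨y, hy.1⟩, ⟨fun h ↦ hy.2 (congrArg Subtype.val h).symm, hdot⟩, rfl⟩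

section FiniteField

variable {F : Type*} [Field F] [Finite F] {n : ℕ}

theorem natCard_TD_vertices :
    Nat.card {x : Fin n → F // x ≠ 0} = Nat.card F ^ n - 1 := by
  classical
  rw [Nat.card_subtype_ne, Nat.card_fun, Nat.card_fin]

theorem ncard_orthogonal_sdiff_zero (v : Fin n → F) (hv : v ≠ 0) :
    ({y | v ⬝ᵥ y = 0} \ {0} : Set (Fin n → F)).ncard = Nat.card F ^ (n - 1) - 1 := by
  have hf : dotProductBilin F F v ≠ 0 := fun h ↦ hv (by
    ext i
    simpa using LinearMap.congr_fun h (Pi.single i 1))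
  have hker := Module.Dual.natCard_ker_of_ne_zero hf
  rw [finrank_fin_fun] at hker
  rw [Set.ncard_sdiff_singleton_of_mem (by simp), ← hker]
  rfl

theorem card_neighborSet_TD_le (v : {x : Fin n → F // x ≠ 0}) :
    Nat.card ((TD F n).neighborSet v) ≤ Nat.card F ^ (n - 1) - 1 := by
  rw [Nat.card_coe_set_eq, ← Set.ncard_image_of_injective _ Subtype.val_injective,
    image_val_neighborSet_TD, ← ncard_orthogonal_sdiff_zero v.1 v.2]
  exact Set.ncard_le_ncard (Set.sdiff_subset_sdiff_right (by simp))

theorem card_neighborSet_TD_of_dotProduct_self_ne_zero (v : {x : Fin n → F // x ≠ 0})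
    (hv : v.1 ⬝ᵥ v.1 ≠ 0) :
    Nat.card ((TD F n).neighborSet v) = Nat.card F ^ (n - 1) - 1 := by
  rw [Nat.card_coe_set_eq, ← Set.ncard_image_of_injective _ Subtype.val_injective,
    image_val_neighborSet_TD, ← ncard_orthogonal_sdiff_zero v.1 v.2]
  congr 1
  ext y
  simp only [Set.mem_sdiff, Set.mem_insert_iff, Set.mem_singleton_iff, Set.mem_ofPred_eq, not_or]
  exact ⟨fun h ↦ ⟨h.1, h.2.1⟩, fun h ↦ ⟨h.1, h.2, by rintro rfl; exact hv h.1⟩⟩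

theorem isGreatest_range_card_neighborSet_TD (hn : 1 ≤ n) :
    IsGreatest (Set.range fun v ↦ Nat.card ((TD F n).neighborSet v))
      (Nat.card F ^ (n - 1) - 1) := by
  refine ⟨⟨⟨Pi.single ⟨0, hn⟩ 1, by simp⟩, ?_⟩, ?_⟩
  · exact card_neighborSet_TD_of_dotProduct_self_ne_zero _ (by simp)
  · rintro _ ⟨v, rfl⟩
    exact card_neighborSet_TD_le v

end FiniteField

/-- if `F`, `E` are finite fields and `TD(F,n)` is isomorphic to `TD(E,m)`,
then `n = m`, `|F| = |E|`, and hence `F` and `E` are isomorphic as fields. -/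
theorem stmt5 (F E : Type*) [Field F] [Fintype F] [Field E] [Fintype E]
    (m n : ℕ) (hm : 1 ≤ m) (hn : 1 ≤ n)
    (h : Nonempty (TD F n ≃g TD E m)) :
    n = m ∧ Fintype.card F = Fintype.card E ∧ Nonempty (F ≃+* E) := by
  obtain ⟨e⟩ := h
  have hvert := Nat.card_congr e.toEquiv
  rw [natCard_TD_vertices, natCard_TD_vertices] at hvert
  have hdeg := (isGreatest_range_card_neighborSet_TD (F := F) hn).unique
    (e.range_card_neighborSet_eq ▸ isGreatest_range_card_neighborSet_TD (F := E) hm)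
  obtain ⟨n, rfl⟩ := Nat.exists_eq_add_of_le' hn
  obtain ⟨m, rfl⟩ := Nat.exists_eq_add_of_le' hm
  simp only [Nat.add_sub_cancel, Nat.card_eq_fintype_card] at hvert hdeg
  obtain ⟨hcard, rfl⟩ := Nat.eq_and_eq_of_pow_succ_eq_of_pow_eq Fintype.one_lt_card
    (Nat.sub_one_cancel (by positivity) (by positivity) hvert)
    (Nat.sub_one_cancel (by positivity) (by positivity) hdeg)
  exact ⟨rfl, hcard, ⟨FiniteField.ringEquivOfCardEq hcard⟩⟩
end

section
/- Let F_1,…,F_t be finite fields, let R = F_1 × ⋯ × F_t, let n ≥ 1, and let a = (a_1,…,a_n) be a nonzero vector in R^n, where a_j = (a_{j1},…,a_{jt}). For i = 1,…,t set τ_i = 0 if (a_{1i}, a_{2i},…, a_{ni}) = (0,…,0) and τ_i = 1 otherwise. Then the degree of a in TD(R,n) equals |R|^n / (∏_{i=1}^t |F_i|^{τ_i}) − 1 if ‖a‖ ≠ 0, and equals |R|^n / (∏_{i=1}^t |F_i|^{τ_i}) − 2 if ‖a‖ = 0. -/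
/-!
The neighbours of `a` are the solutions `b` of `a ⬝ᵥ b = 0` other than `0` and `a`, and `a` is
itself a solution exactly when `‖a‖ = a ⬝ᵥ a = 0`. Over `R = ∏ Fᵢ` the equation splits into one
equation over each `Fᵢ`: it is trivial when `τᵢ = 0`, and otherwise its solutions form the kernel
of a surjective functional `Fᵢⁿ → Fᵢ`, of size `|Fᵢ|ⁿ / |Fᵢ|`. So there are `|R|ⁿ / ∏ |Fᵢ|^τᵢ`
solutions.
-/

open Finset

section DotProduct

variable {ι : Type*} [Fintype ι]

lemma dotProduct_left_surjective {F : Type*} [DivisionRing F] {c : ι → F} (hc : c ≠ 0) :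
    Function.Surjective (c ⬝ᵥ ·) := by
  classical
  obtain ⟨j, hj⟩ := Function.ne_iff.1 hc
  intro y
  refine ⟨Pi.single j ((c j)⁻¹ * y), ?_⟩
  simp only [dotProduct_single, ← mul_assoc, mul_inv_cancel₀ hj, one_mul]

lemma card_dotProduct_eq_zero_mul_card {F : Type*} [DivisionRing F] {c : ι → F} (hc : c ≠ 0) :
    Nat.card {x : ι → F // c ⬝ᵥ x = 0} * Nat.card F = Nat.card F ^ Fintype.card ι := by
  let f : (ι → F) →+ F := AddMonoidHom.mk' (c ⬝ᵥ ·) (dotProduct_add c)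
  have hindex : f.ker.index = Nat.card F := by
    rw [AddSubgroup.index_ker, f.range_eq_top_of_surjective (dotProduct_left_surjective hc),
      AddSubgroup.card_top]
  rw [← Nat.card_eq_fintype_card, ← Nat.card_fun, ← f.ker.card_mul_index, hindex]
  rfl

end DotProduct

section Pi

variable {ι κ : Type*} [Fintype κ] {F : ι → Type*}

lemma dotProduct_pi_apply [∀ i, NonUnitalNonAssocSemiring (F i)] (a b : κ → ∀ i, F i) (i : ι) :
    (a ⬝ᵥ b) i = (fun j => a j i) ⬝ᵥ (fun j => b j i) := by
  simp only [dotProduct, Finset.sum_apply, Pi.mul_apply]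

def dotProductEqZeroPiEquiv [∀ i, NonUnitalNonAssocSemiring (F i)] (a : κ → ∀ i, F i) :
    {b : κ → ∀ i, F i // a ⬝ᵥ b = 0} ≃ ∀ i, {x : κ → F i // (fun j => a j i) ⬝ᵥ x = 0} :=
  (Equiv.subtypeEquiv (Equiv.piComm _) fun b => by
    simp only [funext_iff, dotProduct_pi_apply, Pi.zero_apply]; rfl).trans
    Equiv.subtypePiEquivPi

lemma card_dotProduct_eq_zero_pi_mul_prod [Fintype ι] [∀ i, DivisionRing (F i)]
    (a : κ → ∀ i, F i) (τ : ι → ℕ) (hτ0 : ∀ i, (∀ j, a j i = 0) → τ i = 0)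
    (hτ1 : ∀ i, (∃ j, a j i ≠ 0) → τ i = 1) :
    Nat.card {b // a ⬝ᵥ b = 0} * ∏ i, Nat.card (F i) ^ τ i =
      (∏ i, Nat.card (F i)) ^ Fintype.card κ := by
  rw [Nat.card_congr (dotProductEqZeroPiEquiv a), Nat.card_pi, ← prod_mul_distrib, ← prod_pow]
  refine prod_congr rfl fun i _ => ?_
  by_cases h : ∀ j, a j i = 0
  · have hzero : (fun j => a j i) = 0 := funext h
    simp [hτ0 i h, hzero, Nat.card_fun]
  · push Not at h
    rw [hτ1 i h, pow_one]
    exact card_dotProduct_eq_zero_mul_card (Function.ne_iff.2 h)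

end Pi

namespace TD

variable {R : Type*} [CommRing R] {n : ℕ}

lemma image_val_neighborSet (a : {x : Fin n → R // x ≠ 0}) :
    Subtype.val '' (TD R n).neighborSet a = {b | a.1 ⬝ᵥ b = 0} \ {0, a.1} := by
  ext b
  constructor
  · rintro ⟨v, ⟨hne, hdot⟩, rfl⟩
    refine ⟨hdot, ?_⟩
    simp only [Set.mem_insert_iff, Set.mem_singleton_iff, not_or]
    exact ⟨v.2, fun h => hne (Subtype.ext h).symm⟩
  · rintro ⟨hdot, hb⟩
    simp only [Set.mem_insert_iff, Set.mem_singleton_iff, not_or] at hb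
    exact ⟨⟨b, hb.1⟩, ⟨fun h => hb.2 (congrArg Subtype.val h).symm, hdot⟩, rfl⟩

lemma card_neighborSet_s6 (a : {x : Fin n → R // x ≠ 0}) :
    Nat.card ((TD R n).neighborSet a) = ({b | a.1 ⬝ᵥ b = 0} \ {0, a.1}).ncard := by
  rw [← image_val_neighborSet, Set.ncard_image_of_injective _ Subtype.val_injective]
  rfl

lemma card_neighborSet_of_dotProduct_self_ne_zero (a : {x : Fin n → R // x ≠ 0})
    (ha : a.1 ⬝ᵥ a.1 ≠ 0) :
    Nat.card ((TD R n).neighborSet a) = Nat.card {b // a.1 ⬝ᵥ b = 0} - 1 := by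
  have h0 : 0 ∈ {b | a.1 ⬝ᵥ b = 0} := dotProduct_zero a.1
  have ha' : a.1 ∉ {b | a.1 ⬝ᵥ b = 0} := ha
  rw [card_neighborSet_s6, Set.pair_comm, Set.sdiff_insert_of_notMem ha',
    Set.ncard_sdiff_singleton_of_mem h0]
  rfl

lemma card_neighborSet_of_dotProduct_self_eq_zero [Finite R] (a : {x : Fin n → R // x ≠ 0})
    (ha : a.1 ⬝ᵥ a.1 = 0) :
    Nat.card ((TD R n).neighborSet a) = Nat.card {b // a.1 ⬝ᵥ b = 0} - 2 := by
  have hsub : ({0, a.1} : Set (Fin n → R)) ⊆ {b | a.1 ⬝ᵥ b = 0} :=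
    Set.insert_subset (dotProduct_zero a.1) (Set.singleton_subset_iff.2 ha)
  rw [card_neighborSet_s6, Set.ncard_sdiff hsub, Set.ncard_pair a.2.symm]
  rfl

end TD

theorem stmt6_general (t : ℕ) (F : Fin t → Type*) [∀ i, Field (F i)] [∀ i, Fintype (F i)]
    (n : ℕ)
    (a : {x : Fin n → (∀ i, F i) // x ≠ 0})
    (τ : Fin t → ℕ)
    (hτ0 : ∀ i, (∀ j, a.1 j i = 0) → τ i = 0)
    (hτ1 : ∀ i, (∃ j, a.1 j i ≠ 0) → τ i = 1) :
    (∑ j, a.1 j ^ 2 ≠ 0 →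
      Nat.card ((TD (∀ i, F i) n).neighborSet a) =
        (∏ i, Fintype.card (F i)) ^ n / (∏ i, Fintype.card (F i) ^ τ i) - 1) ∧
    (∑ j, a.1 j ^ 2 = 0 →
      Nat.card ((TD (∀ i, F i) n).neighborSet a) =
        (∏ i, Fintype.card (F i)) ^ n / (∏ i, Fintype.card (F i) ^ τ i) - 2) := by
  have hcount := card_dotProduct_eq_zero_pi_mul_prod a.1 τ hτ0 hτ1
  simp only [Nat.card_eq_fintype_card (α := F _), Fintype.card_fin] at hcount
  have hdiv : (∏ i, Fintype.card (F i)) ^ n / ∏ i, Fintype.card (F i) ^ τ i =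
      Nat.card {b // a.1 ⬝ᵥ b = 0} :=
    Nat.div_eq_of_eq_mul_left (prod_pos fun i _ => pow_pos Fintype.card_pos _) hcount.symm
  have hnorm : ∑ j, a.1 j ^ 2 = a.1 ⬝ᵥ a.1 := by simp only [dotProduct, sq]
  rw [hdiv, hnorm]
  exact ⟨TD.card_neighborSet_of_dotProduct_self_ne_zero a,
    TD.card_neighborSet_of_dotProduct_self_eq_zero a⟩

/-- degree formula in `TD(R,n)` for a reduced ring `R = F₁ × ⋯ × F_t`
(a product of finite fields): the degree of a nonzero vertex `a` is
`|R|^n / ∏ |F i|^(τ i) - 1` if `‖a‖ ≠ 0` and `|R|^n / ∏ |F i|^(τ i) - 2` if `‖a‖ = 0`,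
where `τ i = 0` if all the `i`-th coordinates of the entries of `a` vanish, else `τ i = 1`. -/
theorem stmt6 (t : ℕ) (F : Fin t → Type*) [∀ i, Field (F i)] [∀ i, Fintype (F i)]
    (n : ℕ) (hn : 1 ≤ n)
    (a : {x : Fin n → (∀ i, F i) // x ≠ 0})
    (τ : Fin t → ℕ)
    (hτ0 : ∀ i, (∀ j, a.1 j i = 0) → τ i = 0)
    (hτ1 : ∀ i, (∃ j, a.1 j i ≠ 0) → τ i = 1) :
    (∑ j, a.1 j ^ 2 ≠ 0 →
      Nat.card ((TD (∀ i, F i) n).neighborSet a) =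
        (∏ i, Fintype.card (F i)) ^ n / (∏ i, Fintype.card (F i) ^ τ i) - 1) ∧
    (∑ j, a.1 j ^ 2 = 0 →
      Nat.card ((TD (∀ i, F i) n).neighborSet a) =
        (∏ i, Fintype.card (F i)) ^ n / (∏ i, Fintype.card (F i) ^ τ i) - 2) :=
  stmt6_general t F n a τ hτ0 hτ1
end

section
/- Let F be a finite field with q ≥ 3 elements and let n ≥ 2 be an integer. Then the domination number of TD(F,n) equals q + 1; that is, there is a dominating set of TD(F,n) of cardinality q + 1, and every dominating set of TD(F,n) has cardinality at least q + 1. -/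
open SimpleGraph

/-!
A vertex `v` is dominated by `d` exactly when `v ⬝ᵥ d = 0`, so a dominating set `D` covers the
nonzero vectors by itself together with the hyperplanes `d⊥` (`d ∈ D`), each containing
`q ^ (n - 1) - 1` nonzero vectors.

Every vector is orthogonal to one of the `q + 1` vectors `e₀ + a e₁` (`a ∈ F`) and `e₁`, which
represent the points of the projective line. Conversely, if `|D| ≤ q` then the hyperplanes `d⊥`
cover at most `q (q ^ (n - 1) - 1) < q ^ n - 1` vectors, so they miss some `u ≠ 0`. No multiple
`c • u` can be dominated from outside `D`, so the `q - 1` of them all lie in `D`, and they share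
the hyperplane `u⊥`. Hence `D` covers at most `q + 2 (q ^ (n - 1) - 1)` vectors, which is less
than `q ^ n - 1` once `q ≥ 3` and `n ≥ 2`.
-/

open Finset Matrix

def SimpleGraph.IsDominatingSet {V : Type*} (G : SimpleGraph V) (D : Finset V) : Prop :=
  ∀ v ∉ D, ∃ d ∈ D, G.Adj v d

theorem TD.isDominatingSet_iff {R : Type*} [CommRing R] {n : ℕ}
    {D : Finset {x : Fin n → R // x ≠ 0}} :
    (TD R n).IsDominatingSet D ↔ ∀ v ∉ D, ∃ d ∈ D, v.1 ⬝ᵥ d.1 = 0 := by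
  refine forall₂_congr fun v hv => exists_congr fun d => and_congr_right fun hd => ?_
  exact and_iff_right (ne_of_mem_of_not_mem hd hv).symm

section Field

variable {F : Type*} [Field F] {ι : Type*}

/-- `Option F` stands for the projective line `F ∪ {∞}`: `a ↦ eᵢ + a eⱼ` and `∞ ↦ eⱼ`. -/
def projectiveLinePoint [DecidableEq ι] {i j : ι} (hij : i ≠ j) :
    Option F ↪ {x : ι → F // x ≠ 0} where
  toFun
    | none => ⟨Pi.single j 1, by simp⟩
    | some a => ⟨Pi.single i 1 + Pi.single j a, fun h => by simpa [hij] using congrFun h i⟩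
  inj' a b h := by
    have hi := congrFun (congrArg Subtype.val h) i
    have hj := congrFun (congrArg Subtype.val h) j
    cases a <;> cases b <;> simp_all [Ne.symm hij]

theorem exists_dotProduct_projectiveLinePoint_eq_zero [Fintype ι] [DecidableEq ι] {i j : ι}
    (hij : i ≠ j) (v : ι → F) : ∃ a, v ⬝ᵥ (projectiveLinePoint hij a).1 = 0 := by
  by_cases hvj : v j = 0
  · exact ⟨none, show v ⬝ᵥ Pi.single j 1 = 0 by simp [hvj]⟩
  · refine ⟨some (-v i / v j), show v ⬝ᵥ (Pi.single i 1 + Pi.single j _) = 0 from ?_⟩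
    rw [dotProduct_add, dotProduct_single, dotProduct_single]
    field_simp
    ring

def unitSmul (u : {x : ι → F // x ≠ 0}) : Fˣ ↪ {x : ι → F // x ≠ 0} where
  toFun c := ⟨(c : F) • u.1, smul_ne_zero c.ne_zero u.2⟩
  inj' _ _ h := Units.ext (smul_left_injective F u.2 (congrArg Subtype.val h))

@[simp]
theorem coe_unitSmul (u : {x : ι → F // x ≠ 0}) (c : Fˣ) : (unitSmul u c).1 = (c : F) • u.1 :=
  rfl

theorem unitSmul_mem [Fintype ι] {D : Finset {x : ι → F // x ≠ 0}}
    (hD : ∀ v ∉ D, ∃ d ∈ D, v.1 ⬝ᵥ d.1 = 0) {u : {x : ι → F // x ≠ 0}}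
    (hu : ∀ d ∈ D, u.1 ⬝ᵥ d.1 ≠ 0) (c : Fˣ) : unitSmul u c ∈ D := by
  by_contra h
  obtain ⟨d, hd, hcd⟩ := hD _ h
  exact mul_ne_zero c.ne_zero (hu d hd) (by simpa [smul_dotProduct] using hcd)

end Field

section FiniteField

variable {F : Type*} [Field F] [Fintype F] [DecidableEq F] {ι : Type*} [Fintype ι] [DecidableEq ι]

theorem card_dotProduct_eq_zero {d : ι → F} (hd : d ≠ 0) :
    #{v : ι → F | v ⬝ᵥ d = 0} = Fintype.card F ^ (Fintype.card ι - 1) := by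
  set f := dotProductEquiv F ι d
  have hker := f.finrank_ker_add_one_of_ne_zero ((dotProductEquiv F ι).map_ne_zero_iff.mpr hd)
  rw [Module.finrank_fintype_fun_eq_card] at hker
  rw [← Fintype.card_subtype, Fintype.card_eq_nat_card, Fintype.card_eq_nat_card, ← hker,
    Nat.add_sub_cancel, ← Module.natCard_eq_pow_finrank]
  exact Nat.card_congr (Equiv.subtypeEquivRight fun v => by simp [f, dotProduct_comm])

theorem card_nonzero_vectors :
    Fintype.card {x : ι → F // x ≠ 0} = Fintype.card F ^ Fintype.card ι - 1 := by
  rw [Fintype.card_subtype_compl, Fintype.card_subtype_eq, Fintype.card_fun]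

def nonzeroOrth (d : ι → F) : Finset {x : ι → F // x ≠ 0} :=
  {v | v.1 ⬝ᵥ d = 0}

theorem card_nonzeroOrth {d : ι → F} (hd : d ≠ 0) :
    #(nonzeroOrth d) = Fintype.card F ^ (Fintype.card ι - 1) - 1 := by
  have hmap : (nonzeroOrth d).map (Function.Embedding.subtype _) =
      ({v : ι → F | v ⬝ᵥ d = 0} : Finset _).erase 0 := by
    ext v
    by_cases hv : v = 0 <;> simp [nonzeroOrth, hv]
  rw [← card_map, hmap, card_erase_of_mem (by simp), card_dotProduct_eq_zero hd]

theorem card_biUnion_nonzeroOrth_le (D : Finset {x : ι → F // x ≠ 0}) :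
    #(D.biUnion fun d => nonzeroOrth d.1) ≤ #D * (Fintype.card F ^ (Fintype.card ι - 1) - 1) :=
  card_biUnion_le.trans <| by
    simpa using sum_le_card_nsmul D _ _ fun d _ => (card_nonzeroOrth d.2).le

theorem exists_forall_dotProduct_ne_zero [Nonempty ι] {D : Finset {x : ι → F // x ≠ 0}}
    (hD : #D ≤ Fintype.card F) : ∃ u : {x : ι → F // x ≠ 0}, ∀ d ∈ D, u.1 ⬝ᵥ d.1 ≠ 0 := by
  by_contra! h
  have hcover : univ ⊆ D.biUnion fun d => nonzeroOrth d.1 := fun u _ => by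
    obtain ⟨d, hd, hud⟩ := h u
    exact mem_biUnion.2 ⟨d, hd, by simpa [nonzeroOrth] using hud⟩
  have hcard := (card_le_card hcover).trans (card_biUnion_nonzeroOrth_le D)
  rw [card_univ, card_nonzero_vectors, ← mul_pow_sub_one Fintype.card_ne_zero] at hcard
  set q := Fintype.card F
  set m := q ^ (Fintype.card ι - 1)
  have hq : 1 < q := Fintype.one_lt_card
  have hqm : q ≤ q * m := Nat.le_mul_of_pos_right q (by positivity)
  have := Nat.mul_le_mul_right (m - 1) hD
  rw [Nat.mul_sub_one q] at this
  omega

theorem univ_subset_union_nonzeroOrth {D : Finset {x : ι → F // x ≠ 0}}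
    (hD : ∀ v ∉ D, ∃ d ∈ D, v.1 ⬝ᵥ d.1 = 0) (u : {x : ι → F // x ≠ 0}) :
    univ ⊆ D ∪ nonzeroOrth u.1 ∪ (D \ univ.map (unitSmul u)).biUnion fun d => nonzeroOrth d.1 := by
  intro v _
  by_cases hvD : v ∈ D
  · simp [hvD]
  obtain ⟨d, hd, hvd⟩ := hD v hvD
  by_cases hdS : d ∈ univ.map (unitSmul u)
  · obtain ⟨c, -, rfl⟩ := mem_map.1 hdS
    have : v.1 ⬝ᵥ u.1 = 0 := by simpa [dotProduct_smul, c.ne_zero] using hvd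
    simp [nonzeroOrth, this]
  · exact mem_union_right _ (mem_biUnion.2 ⟨d, mem_sdiff.2 ⟨hd, hdS⟩, by simpa [nonzeroOrth]⟩)

theorem le_card_of_forall_exists_dotProduct_eq_zero (hι : 2 ≤ Fintype.card ι)
    (hq : 3 ≤ Fintype.card F) {D : Finset {x : ι → F // x ≠ 0}}
    (hD : ∀ v ∉ D, ∃ d ∈ D, v.1 ⬝ᵥ d.1 = 0) : Fintype.card F + 1 ≤ #D := by
  have : Nonempty ι := Fintype.card_pos_iff.mp (by omega)
  by_contra! hlt
  obtain ⟨u, hu⟩ := exists_forall_dotProduct_ne_zero (D := D) (by omega)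
  set S := univ.map (unitSmul u)
  have hSD : S ⊆ D := fun v hv => by
    obtain ⟨c, -, rfl⟩ := mem_map.1 hv
    exact unitSmul_mem hD hu c
  have hcard : Fintype.card F ^ Fintype.card ι - 1 ≤
      #D + (Fintype.card F ^ (Fintype.card ι - 1) - 1) +
        #(D \ S) * (Fintype.card F ^ (Fintype.card ι - 1) - 1) :=
    calc _ = #(univ : Finset {x : ι → F // x ≠ 0}) := by rw [card_univ, card_nonzero_vectors]
      _ ≤ _ := card_le_card (univ_subset_union_nonzeroOrth hD u)
      _ ≤ _ := (card_union_le _ _).trans (add_le_add (card_union_le _ _) le_rfl)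
      _ ≤ _ := add_le_add (add_le_add le_rfl (card_nonzeroOrth u.2).le)
        (card_biUnion_nonzeroOrth_le _)
  rw [card_sdiff_of_subset hSD, card_map, card_univ, Fintype.card_units,
    ← mul_pow_sub_one Fintype.card_ne_zero] at hcard
  set q := Fintype.card F
  set m := q ^ (Fintype.card ι - 1)
  have hmq : q ≤ m := Nat.le_self_pow (by omega) _
  have hDS : #D - (q - 1) ≤ 1 := by omega
  have := Nat.mul_le_mul_right (m - 1) hDS
  have := Nat.mul_le_mul_right m hq
  omega

end FiniteField

/-- if `F` is a finite field with `q ≥ 3` elements and `n ≥ 2`, then the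
domination number of `TD(F,n)` is exactly `q + 1`: there is a dominating set of size
`q + 1`, and every dominating set has size at least `q + 1`. -/
theorem stmt9 (F : Type*) [Field F] [Fintype F] (hq : 3 ≤ Fintype.card F)
    (n : ℕ) (hn : 2 ≤ n) :
    (∃ D : Finset {x : Fin n → F // x ≠ 0},
        (∀ v ∉ D, ∃ d ∈ D, (TD F n).Adj v d) ∧ D.card = Fintype.card F + 1) ∧
    (∀ D : Finset {x : Fin n → F // x ≠ 0},
        (∀ v ∉ D, ∃ d ∈ D, (TD F n).Adj v d) → Fintype.card F + 1 ≤ D.card) := by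
  classical
  have hij : (⟨0, by omega⟩ : Fin n) ≠ ⟨1, by omega⟩ := by simp
  refine ⟨⟨univ.map (projectiveLinePoint (F := F) hij), ?_, by simp⟩, fun D hD => ?_⟩
  · refine TD.isDominatingSet_iff.2 fun v _ => ?_
    obtain ⟨a, ha⟩ := exists_dotProduct_projectiveLinePoint_eq_zero hij v.1
    exact ⟨_, mem_map_of_mem _ (mem_univ a), ha⟩
  · exact le_card_of_forall_exists_dotProduct_eq_zero (by simpa using hn) hq
      (TD.isDominatingSet_iff.1 hD)
end

section
/- Let R be a finite commutative ring with nonzero identity that is not a field, and let n ≥ 2 be an integer. Then the domination number of TD(R,n) is at most k² − 1, where k is the number of non-invertible elements of R; i.e., TD(R,n) has a dominating set of cardinality at most k² − 1. -/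
open SimpleGraph

/-!
Fix a nonzero non-unit `a` and two coordinates `i ≠ j`. Every pair `(v, w)` is orthogonal to a
nonzero pair of non-units: `(a, 0)` if `v a = 0`, and `(w a, -v a)` otherwise. Hence the vectors
supported on `{i, j}` whose two entries are non-units, not both zero, dominate `TD(R,n)`, and
there are `k² - 1` of them.
-/

section NonunitPair

variable {R : Type*} [CommRing R]

lemma exists_nonunit_pair_orthogonal [Nontrivial R] {a : R} (ha0 : a ≠ 0) (ha : ¬IsUnit a)
    (v w : R) :
    ∃ p : R × R, p ≠ 0 ∧ ¬IsUnit p.1 ∧ ¬IsUnit p.2 ∧ v * p.1 + w * p.2 = 0 := by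
  by_cases hva : v * a = 0
  · exact ⟨(a, 0), fun h => ha0 (congrArg Prod.fst h), ha, not_isUnit_zero, by simp [hva]⟩
  · refine ⟨(w * a, -(v * a)), fun h => hva (neg_eq_zero.mp (congrArg Prod.snd h)),
      fun hu => ha (isUnit_of_mul_isUnit_right hu),
      fun hu => ha (isUnit_of_mul_isUnit_right ((IsUnit.neg_iff _).mp hu)), by ring⟩

def pairVec {ι : Type*} [DecidableEq ι] (i j : ι) (p : R × R) : ι → R :=
  Pi.single i p.1 + Pi.single j p.2

variable {ι : Type*} [DecidableEq ι] {i j : ι}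

lemma pairVec_apply_left (hij : i ≠ j) (p : R × R) : pairVec i j p i = p.1 := by
  simp [pairVec, Pi.single_eq_of_ne hij]

lemma pairVec_apply_right (hij : i ≠ j) (p : R × R) : pairVec i j p j = p.2 := by
  simp [pairVec, Pi.single_eq_of_ne hij.symm]

lemma pairVec_ne_zero (hij : i ≠ j) {p : R × R} (hp : p ≠ 0) : pairVec i j p ≠ 0 := by
  intro h
  apply hp
  ext
  · simpa [pairVec_apply_left hij] using congrFun h i
  · simpa [pairVec_apply_right hij] using congrFun h j

lemma sum_mul_pairVec [Fintype ι] (x : ι → R) (p : R × R) :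
    ∑ l, x l * pairVec i j p l = x i * p.1 + x j * p.2 := by
  simp [pairVec, mul_add, Finset.sum_add_distrib, Pi.single_apply]

end NonunitPair

section Domination

variable (R : Type*) [CommRing R] [Fintype R] [DecidableEq R]

def nonzeroNonunitPairs : Finset (R × R) :=
  (Finset.univ.filter (¬IsUnit · : R → Prop) ×ˢ Finset.univ.filter (¬IsUnit ·)).erase 0

lemma card_nonzeroNonunitPairs [Nontrivial R] :
    (nonzeroNonunitPairs R).card = Nat.card {x : R // ¬IsUnit x} ^ 2 - 1 := by
  rw [nonzeroNonunitPairs, Finset.card_erase_of_mem (by simp), Finset.card_product,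
    Nat.card_eq_fintype_card, Fintype.card_subtype, sq]

variable {R} {n : ℕ}

def pairDominatingSet (i j : Fin n) : Finset {x : Fin n → R // x ≠ 0} :=
  ((nonzeroNonunitPairs R).image (pairVec i j)).subtype (· ≠ 0)

lemma card_pairDominatingSet_le [Nontrivial R] (i j : Fin n) :
    (pairDominatingSet (R := R) i j).card ≤ Nat.card {x : R // ¬IsUnit x} ^ 2 - 1 :=
  calc (pairDominatingSet i j).card
      ≤ ((nonzeroNonunitPairs R).image (pairVec i j)).card :=
        (Finset.card_subtype _ _).trans_le (Finset.card_filter_le _ _)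
    _ ≤ (nonzeroNonunitPairs R).card := Finset.card_image_le
    _ = Nat.card {x : R // ¬IsUnit x} ^ 2 - 1 := card_nonzeroNonunitPairs R

lemma pairDominatingSet_dominates [Nontrivial R] {i j : Fin n} (hij : i ≠ j) {a : R}
    (ha0 : a ≠ 0) (ha : ¬IsUnit a) (v : {x : Fin n → R // x ≠ 0})
    (hv : v ∉ pairDominatingSet i j) : ∃ d ∈ pairDominatingSet i j, (TD R n).Adj v d := by
  obtain ⟨p, hp0, hp1, hp2, hvp⟩ := exists_nonunit_pair_orthogonal ha0 ha (v.1 i) (v.1 j)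
  have hd : ⟨pairVec i j p, pairVec_ne_zero hij hp0⟩ ∈ pairDominatingSet i j :=
    Finset.mem_subtype.mpr (Finset.mem_image_of_mem _ (by simp [nonzeroNonunitPairs, hp0, hp1, hp2]))
  exact ⟨_, hd, fun h => hv (h ▸ hd), by rwa [sum_mul_pairVec]⟩

end Domination

/-- if `R` is a finite commutative ring with nonzero identity that is not a
field and `n ≥ 2`, then `TD(R,n)` has a dominating set of size at most `k² - 1`, where
`k` is the number of non-invertible elements of `R`. -/
theorem stmt10 (R : Type*) [CommRing R] [Fintype R] [Nontrivial R]
    (hR : ¬ IsField R) (n : ℕ) (hn : 2 ≤ n)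
    (k : ℕ) (hk : k = Nat.card {x : R // ¬ IsUnit x}) :
    ∃ D : Finset {x : Fin n → R // x ≠ 0},
      (∀ v ∉ D, ∃ d ∈ D, (TD R n).Adj v d) ∧ D.card ≤ k ^ 2 - 1 := by
  classical
  obtain ⟨a, ha0, ha⟩ := Ring.exists_not_isUnit_of_not_isField hR
  have h01 : (⟨0, by omega⟩ : Fin n) ≠ ⟨1, by omega⟩ := by simp
  exact ⟨pairDominatingSet _ _, pairDominatingSet_dominates h01 ha0 ha,
    hk ▸ card_pairDominatingSet_le _ _⟩
end

section
/- Let F be an infinite field and let n ≥ 1. Then TD(F,n) has no finite dominating set; in particular the domination number of TD(F,n) is infinite. -/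
/-! For `d ≠ 0`, the dot product of `d` with the moment vector `(t, t², …, tⁿ)` is `t` times a
nonzero polynomial in `t`, so it vanishes for only finitely many `t`. Over an infinite domain, a
finite set `D` of nonzero vectors therefore misses the moment vector of some `t ≠ 0` that is
orthogonal to no vector of `D`, and this vertex is not dominated by `D`. -/

open SimpleGraph

open Polynomial

theorem Polynomial.eval_ofFn {R : Type*} [Semiring R] [DecidableEq R] {n : ℕ} (v : Fin n → R)
    (t : R) : (ofFn n v).eval t = ∑ i, v i * t ^ (i : ℕ) := by
  simp only [ofFn_eq_sum_monomial, eval_finsetSum, eval_monomial]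

def momentVector {R : Type*} [Monoid R] (n : ℕ) (t : R) : Fin n → R :=
  fun i => t ^ ((i : ℕ) + 1)

section MomentVector

variable {R : Type*} {n : ℕ}

theorem momentVector_injective [Monoid R] (hn : 1 ≤ n) :
    Function.Injective (momentVector (R := R) n) :=
  fun s t hst => by simpa [momentVector] using congrFun hst ⟨0, hn⟩

theorem momentVector_ne_zero [MonoidWithZero R] (hn : 1 ≤ n) {t : R} (ht : t ≠ 0) :
    momentVector n t ≠ 0 :=
  fun h => ht <| by simpa [momentVector] using congrFun h ⟨0, hn⟩

theorem dotProduct_momentVector [CommSemiring R] [DecidableEq R] (d : Fin n → R) (t : R) :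
    d ⬝ᵥ momentVector n t = t * (ofFn n d).eval t := by
  simp only [dotProduct, momentVector, eval_ofFn, Finset.mul_sum, pow_succ]
  exact Finset.sum_congr rfl fun i _ => by ring

theorem finite_setOf_dotProduct_momentVector_eq_zero [CommRing R] [IsDomain R] {d : Fin n → R}
    (hd : d ≠ 0) : {t : R | d ⬝ᵥ momentVector n t = 0}.Finite := by
  classical
  have hp : ofFn n d ≠ 0 := fun h => hd <| injective_ofFn n (h.trans (ofFn_zero n).symm)
  refine ((Set.finite_singleton 0).union (finite_setOfPred_isRoot hp)).subset fun t ht => ?_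
  simpa [dotProduct_momentVector] using ht

end MomentVector

theorem TD.infinite_of_dominating {R : Type*} [CommRing R] [IsDomain R] [Infinite R] {n : ℕ}
    (hn : 1 ≤ n) (D : Set {x : Fin n → R // x ≠ 0})
    (hD : ∀ v ∉ D, ∃ d ∈ D, (TD R n).Adj v d) : D.Infinite := by
  intro hfin
  have hbad : ({0} ∪ momentVector n ⁻¹' (Subtype.val '' D) ∪
      ⋃ d ∈ D, {t : R | d.1 ⬝ᵥ momentVector n t = 0}).Finite :=
    ((Set.finite_singleton 0).union
        ((hfin.image _).preimage (momentVector_injective hn).injOn)).union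
      (hfin.biUnion fun d _ => finite_setOf_dotProduct_momentVector_eq_zero d.2)
  obtain ⟨t, ht⟩ := hbad.exists_notMem
  simp only [Set.mem_union, Set.mem_singleton_iff, Set.mem_preimage, Set.mem_image,
    Set.mem_iUnion, Set.mem_ofPred_eq, not_or, not_exists, not_and] at ht
  obtain ⟨⟨ht0, htD⟩, htorth⟩ := ht
  let v : {x : Fin n → R // x ≠ 0} := ⟨momentVector n t, momentVector_ne_zero hn ht0⟩
  obtain ⟨d, hdD, hadj⟩ := hD v fun hv => htD v hv rfl
  exact htorth d hdD (by rw [dotProduct_comm]; exact hadj.2)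

/-- if `F` is an infinite field and `n ≥ 1`, then every dominating set of
`TD(F,n)` is infinite; in particular `TD(F,n)` has no finite dominating set. -/
theorem stmt12 (F : Type*) [Field F] [Infinite F] (n : ℕ) (hn : 1 ≤ n) :
    ∀ D : Set {x : Fin n → F // x ≠ 0},
      (∀ v ∉ D, ∃ d ∈ D, (TD F n).Adj v d) → D.Infinite :=
  TD.infinite_of_dominating hn
end

section
/- Let F be a finite field with q elements such that there exist a, b ∈ F with (a,b) ≠ (0,0) and a² + b² = 0, and let n ≥ 2. Then the clique number of TD(F,n) is at least q^{⌊n/2⌋} − 1; moreover, if n is odd, then the clique number of TD(F,n) is at least q^{⌊n/2⌋}. -/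
open SimpleGraph

/-!
Over a field with `i² = -1` the vectors `(t, i • t, 0)` with `t ∈ F^m`, `m = ⌊n/2⌋`, are pairwise
orthogonal, since `t • s + (i • t) • (i • s) = (1 + i²) (t • s) = 0`. They form a totally isotropic
subspace with `q^m` elements, whose nonzero elements are a clique of `TD(F,n)`. When `n` is odd the
last coordinate vector is orthogonal to this subspace and lies outside it, so it enlarges the
clique by one.
-/

open Finset

lemma exists_mul_self_eq_neg_one {F : Type*} [Field F] {a b : F} (hab : (a, b) ≠ (0, 0))
    (h : a ^ 2 + b ^ 2 = 0) : ∃ i : F, i * i = -1 := by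
  have ha : a ≠ 0 := by
    rintro rfl
    have hb : b = 0 := pow_eq_zero_iff two_ne_zero |>.mp (by simpa using h)
    exact hab (by rw [hb])
  exact ⟨b / a, by field_simp; linear_combination h⟩

namespace TD

variable {R : Type*} [CommRing R] {n : ℕ}

theorem isClique_subtype_ne_zero [DecidableEq (Fin n → R)] {S : Finset (Fin n → R)}
    (hS : (S : Set (Fin n → R)).Pairwise fun x y => ∑ k, x k * y k = 0) :
    (TD R n).IsClique (S.subtype (· ≠ 0) : Set {x : Fin n → R // x ≠ 0}) := by
  intro x hx y hy hxy
  rw [mem_coe, mem_subtype] at hx hy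
  exact ⟨hxy, hS hx hy (Subtype.coe_ne_coe.mpr hxy)⟩

theorem exists_isClique_card_ge_of_pairwise {S : Finset (Fin n → R)}
    (hS : (S : Set (Fin n → R)).Pairwise fun x y => ∑ k, x k * y k = 0) :
    ∃ s : Finset {x : Fin n → R // x ≠ 0}, (TD R n).IsClique ↑s ∧ #S - 1 ≤ #s := by
  classical
  refine ⟨S.subtype (· ≠ 0), isClique_subtype_ne_zero hS, ?_⟩
  rw [card_subtype, filter_ne']
  exact pred_card_le_card_erase

end TD

section IsotropicVec

variable {R : Type*} [CommRing R] {m r : ℕ}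

def isotropicVec (i : R) (m r : ℕ) (t : Fin m → R) : Fin (m + m + r) → R :=
  Fin.append (Fin.append t (i • t)) 0

theorem isotropicVec_injective (i : R) : Function.Injective (isotropicVec i m r) := by
  intro t s hts
  funext j
  simpa [isotropicVec, Fin.append_left] using congrFun hts (Fin.castAdd r (Fin.castAdd m j))

theorem sum_isotropicVec_mul_isotropicVec {i : R} (hi : i * i = -1) (t s : Fin m → R) :
    ∑ k, isotropicVec i m r t k * isotropicVec i m r s k = 0 := by
  simp only [isotropicVec, Fin.sum_univ_add, Fin.append_left, Fin.append_right, Pi.smul_apply,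
    smul_eq_mul, Pi.zero_apply, mul_zero, sum_const_zero, add_zero, ← sum_add_distrib]
  refine sum_eq_zero fun j _ => ?_
  linear_combination (t j * s j) * hi

theorem sum_isotropicVec_mul_append_zero (i : R) (t : Fin m → R) (u : Fin r → R) :
    ∑ k, isotropicVec i m r t k * Fin.append (0 : Fin (m + m) → R) u k = 0 := by
  simp [isotropicVec, Fin.sum_univ_add, Fin.append_left, Fin.append_right]

end IsotropicVec

namespace TD

variable {R : Type*} [CommRing R] [Fintype R] {i : R} {m r n : ℕ}

theorem exists_isClique_card_ge_pow (hi : i * i = -1) (hn : m + m + r = n) :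
    ∃ s : Finset {x : Fin n → R // x ≠ 0},
      (TD R n).IsClique ↑s ∧ Fintype.card R ^ m - 1 ≤ #s := by
  classical
  subst hn
  have hS : ((univ.image (isotropicVec i m r) : Finset _) : Set (Fin (m + m + r) → R)).Pairwise
      fun x y => ∑ k, x k * y k = 0 := by
    rw [coe_image, coe_univ, Set.image_univ]
    rintro _ ⟨t, -, rfl⟩ _ ⟨s, -, rfl⟩ -
    exact sum_isotropicVec_mul_isotropicVec hi t s
  simpa [card_image_of_injective _ (isotropicVec_injective i)] using
    exists_isClique_card_ge_of_pairwise hS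

theorem exists_isClique_card_ge_pow_of_pos [Nontrivial R] (hi : i * i = -1)
    (hn : m + m + r = n) (hr : 0 < r) :
    ∃ s : Finset {x : Fin n → R // x ≠ 0},
      (TD R n).IsClique ↑s ∧ Fintype.card R ^ m ≤ #s := by
  classical
  subst hn
  set e : Fin (m + m + r) → R := Fin.append 0 fun _ => 1
  have he : e ∉ univ.image (isotropicVec i m r) := by
    rw [mem_image]
    rintro ⟨t, -, ht⟩
    have h := congrFun ht (Fin.natAdd (m + m) ⟨0, hr⟩)
    simp only [e, isotropicVec, Fin.append_right] at h
    exact zero_ne_one h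
  have hS : ((insert e (univ.image (isotropicVec i m r)) : Finset _) :
      Set (Fin (m + m + r) → R)).Pairwise fun x y => ∑ k, x k * y k = 0 := by
    rw [coe_insert, coe_image, coe_univ, Set.image_univ]
    refine Set.Pairwise.insert ?_ ?_
    · rintro _ ⟨t, -, rfl⟩ _ ⟨s, -, rfl⟩ -
      exact sum_isotropicVec_mul_isotropicVec hi t s
    · rintro _ ⟨t, -, rfl⟩ -
      have h := sum_isotropicVec_mul_append_zero i t fun _ : Fin r => 1
      exact ⟨by simpa only [mul_comm] using h, h⟩
  simpa [card_insert_of_notMem he, card_image_of_injective _ (isotropicVec_injective i)] using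
    exists_isClique_card_ge_of_pairwise hS

end TD

theorem stmt17_general (F : Type*) [Field F] [Fintype F]
    (a b : F) (hab : (a, b) ≠ (0, 0)) (h : a ^ 2 + b ^ 2 = 0)
    (n : ℕ) :
    (∃ s : Finset {x : Fin n → F // x ≠ 0},
        (TD F n).IsClique ↑s ∧ Fintype.card F ^ (n / 2) - 1 ≤ s.card) ∧
    (Odd n → ∃ s : Finset {x : Fin n → F // x ≠ 0},
        (TD F n).IsClique ↑s ∧ Fintype.card F ^ (n / 2) ≤ s.card) := by
  obtain ⟨i, hi⟩ := exists_mul_self_eq_neg_one hab h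
  have hn : n / 2 + n / 2 + n % 2 = n := by omega
  exact ⟨TD.exists_isClique_card_ge_pow hi hn,
    fun hodd => TD.exists_isClique_card_ge_pow_of_pos hi hn (Nat.odd_iff.mp hodd).symm.le⟩

/-- if a finite field `F` with `q` elements admits `(a,b) ≠ (0,0)` with
`a² + b² = 0` and `n ≥ 2`, then the clique number of `TD(F,n)` is at least
`q^⌊n/2⌋ - 1`, and at least `q^⌊n/2⌋` when `n` is odd. -/
theorem stmt17 (F : Type*) [Field F] [Fintype F]
    (a b : F) (hab : (a, b) ≠ (0, 0)) (h : a ^ 2 + b ^ 2 = 0)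
    (n : ℕ) (hn : 2 ≤ n) :
    (∃ s : Finset {x : Fin n → F // x ≠ 0},
        (TD F n).IsClique ↑s ∧ Fintype.card F ^ (n / 2) - 1 ≤ s.card) ∧
    (Odd n → ∃ s : Finset {x : Fin n → F // x ≠ 0},
        (TD F n).IsClique ↑s ∧ Fintype.card F ^ (n / 2) ≤ s.card) :=
  stmt17_general F a b hab h n
end

section
/- Let R be a commutative ring with nonzero identity such that there exist a, b ∈ R with (a,b) ≠ (0,0) and a² + b² = 0, and let n ≥ 2. Then the clique number of TD(R,n) is at least 2^{⌊n/2⌋} − 1; moreover, if n is odd, then the clique number of TD(R,n) is at least 2^{⌊n/2⌋}. -/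
open SimpleGraph

/-!
Split the coordinates into `⌊n/2⌋` consecutive pairs and put `(a, b)` on the `k`-th pair. These
vectors have pairwise disjoint supports and are self-orthogonal because `a² + b² = 0`, so their
`2^⌊n/2⌋` subset sums are distinct and pairwise orthogonal; discarding the empty sum `0` leaves a
clique. For odd `n` the unit vector on the leftover last coordinate is orthogonal to all of them.
-/

open Function Finset

section DisjointSupports

variable {R ι κ : Type*}

theorem dotProduct_eq_zero_of_disjoint_support [Fintype ι] [NonUnitalNonAssocSemiring R]
    {x y : ι → R} (h : Disjoint (support x) (support y)) : x ⬝ᵥ y = 0 :=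
  Finset.sum_eq_zero fun i _ => by
    by_cases hx : x i = 0
    · rw [hx, zero_mul]
    · rw [notMem_support.mp (Set.disjoint_left.mp h hx), mul_zero]

theorem finset_sum_apply_of_pairwise_disjoint_support [AddCommMonoid R] [DecidableEq κ]
    {u : κ → ι → R} (hu : Pairwise fun k l => Disjoint (support (u k)) (support (u l)))
    {k : κ} {i : ι} (hi : u k i ≠ 0) (S : Finset κ) :
    (∑ l ∈ S, u l) i = if k ∈ S then u k i else 0 := by
  have hvanish : ∀ l, l ≠ k → u l i = 0 := fun l hlk =>
    notMem_support.mp (Set.disjoint_right.mp (hu hlk) hi)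
  rw [Finset.sum_apply]
  split_ifs with hk
  · exact Finset.sum_eq_single_of_mem k hk fun l _ hlk => hvanish l hlk
  · exact Finset.sum_eq_zero fun l hl => hvanish l (ne_of_mem_of_not_mem hl hk)

theorem injective_finset_sum_of_pairwise_disjoint_support [AddCommMonoid R] {u : κ → ι → R}
    (hu : Pairwise fun k l => Disjoint (support (u k)) (support (u l))) (hu0 : ∀ k, u k ≠ 0) :
    Injective fun S : Finset κ => ∑ k ∈ S, u k := by
  classical
  intro S T hST
  by_contra hne
  obtain ⟨k, hk⟩ := not_forall.mp (mt Finset.ext hne)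
  obtain ⟨i, hi⟩ := Function.ne_iff.mp (hu0 k)
  have := congrFun hST i
  simp only [finset_sum_apply_of_pairwise_disjoint_support hu hi] at this
  split_ifs at this <;> tauto

theorem ne_finset_sum_of_disjoint_support [AddCommMonoid R] {u : κ → ι → R} {w : ι → R}
    (hw0 : w ≠ 0) (hw : ∀ k, Disjoint (support w) (support (u k))) (S : Finset κ) :
    w ≠ ∑ k ∈ S, u k := by
  obtain ⟨i, hi⟩ := Function.ne_iff.mp hw0
  have hvanish : (∑ k ∈ S, u k) i = 0 := by
    rw [Finset.sum_apply]
    exact Finset.sum_eq_zero fun k _ => notMem_support.mp (Set.disjoint_left.mp (hw k) hi)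
  intro h
  exact hi (by rw [h, hvanish, Pi.zero_apply])

variable [Fintype ι] [NonUnitalNonAssocSemiring R] {u : κ → ι → R}

theorem finset_sum_dotProduct_finset_sum_eq_zero
    (hu : Pairwise fun k l => Disjoint (support (u k)) (support (u l)))
    (hiso : ∀ k, u k ⬝ᵥ u k = 0) (S T : Finset κ) :
    (∑ k ∈ S, u k) ⬝ᵥ (∑ l ∈ T, u l) = 0 := by
  rw [sum_dotProduct]
  simp only [dotProduct_sum]
  refine Finset.sum_eq_zero fun k _ => Finset.sum_eq_zero fun l _ => ?_
  obtain rfl | hkl := eq_or_ne k l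
  · exact hiso k
  · exact dotProduct_eq_zero_of_disjoint_support (hu hkl)

theorem dotProduct_finset_sum_eq_zero_of_disjoint_support {w : ι → R}
    (hw : ∀ k, Disjoint (support w) (support (u k))) (S : Finset κ) :
    w ⬝ᵥ ∑ k ∈ S, u k = 0 := by
  rw [dotProduct_sum]
  exact Finset.sum_eq_zero fun k _ => dotProduct_eq_zero_of_disjoint_support (hw k)

end DisjointSupports

section SubsetSums

variable {R ι κ : Type*} [Fintype κ] [DecidableEq (ι → R)]

def subsetSums [AddCommMonoid R] (u : κ → ι → R) : Finset (ι → R) :=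
  univ.image fun S : Finset κ => ∑ k ∈ S, u k

theorem card_subsetSums [AddCommMonoid R] {u : κ → ι → R}
    (hu : Pairwise fun k l => Disjoint (support (u k)) (support (u l))) (hu0 : ∀ k, u k ≠ 0) :
    (subsetSums u).card = 2 ^ Fintype.card κ := by
  rw [subsetSums,
    card_image_of_injective _ (injective_finset_sum_of_pairwise_disjoint_support hu hu0),
    card_univ, Fintype.card_finset]

theorem notMem_subsetSums [AddCommMonoid R] {u : κ → ι → R} {w : ι → R} (hw0 : w ≠ 0)
    (hw : ∀ k, Disjoint (support w) (support (u k))) : w ∉ subsetSums u := by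
  rw [subsetSums, mem_image]
  rintro ⟨S, -, hS⟩
  exact ne_finset_sum_of_disjoint_support hw0 hw S hS.symm

variable [Fintype ι] {u : κ → ι → R}

theorem pairwise_dotProduct_subsetSums [NonUnitalNonAssocSemiring R]
    (hu : Pairwise fun k l => Disjoint (support (u k)) (support (u l)))
    (hiso : ∀ k, u k ⬝ᵥ u k = 0) :
    (subsetSums u : Set (ι → R)).Pairwise fun x y => x ⬝ᵥ y = 0 := by
  rintro _ hx _ hy -
  obtain ⟨S, -, rfl⟩ := mem_image.mp hx
  obtain ⟨T, -, rfl⟩ := mem_image.mp hy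
  exact finset_sum_dotProduct_finset_sum_eq_zero hu hiso S T

theorem pairwise_dotProduct_insert_subsetSums [NonUnitalNonAssocCommSemiring R]
    (hu : Pairwise fun k l => Disjoint (support (u k)) (support (u l)))
    (hiso : ∀ k, u k ⬝ᵥ u k = 0) {w : ι → R}
    (hw : ∀ k, Disjoint (support w) (support (u k))) :
    (insert w (subsetSums u : Set (ι → R))).Pairwise fun x y => x ⬝ᵥ y = 0 := by
  refine Set.pairwise_insert.mpr ⟨pairwise_dotProduct_subsetSums hu hiso, fun x hx _ => ?_⟩
  obtain ⟨S, -, rfl⟩ := mem_image.mp hx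
  have hwS := dotProduct_finset_sum_eq_zero_of_disjoint_support hw S
  exact ⟨hwS, dotProduct_comm w _ ▸ hwS⟩

end SubsetSums

theorem TD.exists_isClique_card_ge {R : Type*} [CommRing R] {n : ℕ} (V : Finset (Fin n → R))
    (hV : (V : Set (Fin n → R)).Pairwise fun x y => x ⬝ᵥ y = 0) :
    ∃ s : Finset {x : Fin n → R // x ≠ 0},
      (TD R n).IsClique ↑s ∧ V.card - 1 ≤ s.card := by
  classical
  refine ⟨V.subtype (· ≠ 0), fun x hx y hy hxy => ⟨hxy, ?_⟩, ?_⟩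
  · exact hV (Finset.mem_subtype.mp hx) (Finset.mem_subtype.mp hy) (Subtype.coe_ne_coe.mpr hxy)
  · rw [Finset.card_subtype, Finset.filter_ne']
    exact Finset.pred_card_le_card_erase

section IsotropicBlocks

variable {R : Type*} [Semiring R] {n : ℕ}

def isotropicBlock (a b : R) (k : Fin (n / 2)) : Fin n → R :=
  Pi.single ⟨2 * k, by omega⟩ a + Pi.single ⟨2 * k + 1, by omega⟩ b

theorem support_isotropicBlock_subset (a b : R) (k : Fin (n / 2)) :
    support (isotropicBlock a b k) ⊆ {i | (i : ℕ) = 2 * k ∨ (i : ℕ) = 2 * k + 1} := by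
  intro i hi
  by_contra hik
  simp only [Set.mem_ofPred_eq, not_or] at hik
  simp [isotropicBlock, Fin.ext_iff, hik] at hi

theorem pairwise_disjoint_support_isotropicBlock (a b : R) :
    Pairwise fun k l : Fin (n / 2) =>
      Disjoint (support (isotropicBlock a b k)) (support (isotropicBlock a b l)) := by
  intro k l hkl
  refine Set.disjoint_left.mpr fun i hik hil => ?_
  have := support_isotropicBlock_subset a b k hik
  have := support_isotropicBlock_subset a b l hil
  have := Fin.val_ne_of_ne hkl
  simp only [Set.mem_ofPred_eq] at *
  omega

theorem isotropicBlock_ne_zero {a b : R} (hab : (a, b) ≠ (0, 0)) (k : Fin (n / 2)) :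
    isotropicBlock a b k ≠ 0 := by
  intro h
  have ha := congrFun h ⟨2 * k, by omega⟩
  have hb := congrFun h ⟨2 * k + 1, by omega⟩
  simp [isotropicBlock, Fin.ext_iff] at ha hb
  exact hab (by rw [ha, hb])

theorem isotropicBlock_dotProduct_self (a b : R) (k : Fin (n / 2)) :
    isotropicBlock a b k ⬝ᵥ isotropicBlock a b k = a ^ 2 + b ^ 2 := by
  simp [isotropicBlock, Fin.ext_iff, sq]

theorem disjoint_support_single_last_isotropicBlock (hn : Odd n) (c a b : R) (k : Fin (n / 2)) :
    Disjoint (support (Pi.single (⟨n - 1, by grind⟩ : Fin n) c))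
      (support (isotropicBlock a b k)) := by
  refine Set.disjoint_left.mpr fun i hi hik => ?_
  have := Pi.support_single_subset hi
  have := support_isotropicBlock_subset a b k hik
  have := Nat.odd_iff.mp hn
  simp only [Set.mem_singleton_iff, Set.mem_ofPred_eq, Fin.ext_iff] at *
  omega

end IsotropicBlocks

theorem stmt18_general (R : Type*) [CommRing R] [Nontrivial R]
    (a b : R) (hab : (a, b) ≠ (0, 0)) (h : a ^ 2 + b ^ 2 = 0)
    (n : ℕ) :
    (∃ s : Finset {x : Fin n → R // x ≠ 0},
        (TD R n).IsClique ↑s ∧ 2 ^ (n / 2) - 1 ≤ s.card) ∧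
    (Odd n → ∃ s : Finset {x : Fin n → R // x ≠ 0},
        (TD R n).IsClique ↑s ∧ 2 ^ (n / 2) ≤ s.card) := by
  classical
  set u : Fin (n / 2) → Fin n → R := isotropicBlock a b
  have hu := pairwise_disjoint_support_isotropicBlock (n := n) a b
  have hiso (k : Fin (n / 2)) : u k ⬝ᵥ u k = 0 := (isotropicBlock_dotProduct_self a b k).trans h
  have hcard : (subsetSums u).card = 2 ^ (n / 2) := by
    rw [card_subsetSums hu (isotropicBlock_ne_zero hab), Fintype.card_fin]
  refine ⟨hcard ▸ TD.exists_isClique_card_ge _ (pairwise_dotProduct_subsetSums hu hiso),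
    fun hodd => ?_⟩
  set w : Fin n → R := Pi.single ⟨n - 1, by grind⟩ 1
  have hw := disjoint_support_single_last_isotropicBlock hodd (1 : R) a b
  have hwV : w ∉ subsetSums u := notMem_subsetSums (Pi.single_ne_zero_iff.mpr one_ne_zero) hw
  obtain ⟨s, hs, hcard'⟩ := TD.exists_isClique_card_ge (insert w (subsetSums u))
    (by rw [coe_insert]; exact pairwise_dotProduct_insert_subsetSums hu hiso hw)
  rw [card_insert_of_notMem hwV, hcard, Nat.add_sub_cancel] at hcard'
  exact ⟨s, hs, hcard'⟩

/-- if a commutative ring `R` with nonzero identity admits `(a,b) ≠ (0,0)`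
with `a² + b² = 0` and `n ≥ 2`, then the clique number of `TD(R,n)` is at least
`2^⌊n/2⌋ - 1`, and at least `2^⌊n/2⌋` when `n` is odd. -/
theorem stmt18 (R : Type*) [CommRing R] [Nontrivial R]
    (a b : R) (hab : (a, b) ≠ (0, 0)) (h : a ^ 2 + b ^ 2 = 0)
    (n : ℕ) (hn : 2 ≤ n) :
    (∃ s : Finset {x : Fin n → R // x ≠ 0},
        (TD R n).IsClique ↑s ∧ 2 ^ (n / 2) - 1 ≤ s.card) ∧
    (Odd n → ∃ s : Finset {x : Fin n → R // x ≠ 0},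
        (TD R n).IsClique ↑s ∧ 2 ^ (n / 2) ≤ s.card) :=
  stmt18_general R a b hab h n
end

section
/- Let F be a finite field with q elements such that there exist a, b ∈ F with (a,b) ≠ (0,0) and a² + b² = 0, and let n ≥ 1. Then the maximum cardinality of a subset S of F^n such that u·v = 0 for all u, v ∈ S (including u = v) equals q^{⌊n/2⌋}: there exists such a set of cardinality q^{⌊n/2⌋}, and every such set has cardinality at most q^{⌊n/2⌋}. -/
/-!
A set of pairwise orthogonal, self-orthogonal vectors spans a totally isotropic subspace `W ≤ Wᗮ`.
The dot product is nondegenerate, so `dim Wᗮ = n - dim W`, whence `dim W ≤ ⌊n/2⌋` and the set has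
at most `q ^ ⌊n/2⌋` elements. Conversely `a² + b² = 0` with `a ≠ 0` gives `i = b / a` with
`i² = -1`, and the vectors `(x, i • x, 0)` with `x ∈ F ^ ⌊n/2⌋` form a totally isotropic set of
that size.
-/

open Module Finset Matrix

namespace LinearMap.BilinForm

variable {K V : Type*} [Field K] [AddCommGroup V] [Module K V] {B : LinearMap.BilinForm K V}

lemma span_le_orthogonal_span {s : Set V}
    (hs : ∀ u ∈ s, ∀ v ∈ s, B u v = 0) :
    Submodule.span K s ≤ B.orthogonal (Submodule.span K s) := by
  refine Submodule.span_le.mpr fun v hv w hw => ?_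
  have hker : Submodule.span K s ≤ LinearMap.ker (B.flip v) :=
    Submodule.span_le.mpr fun u hu => hs u hu v hv
  exact hker hw

lemma two_mul_finrank_le_of_le_orthogonal [FiniteDimensional K V]
    (hB : B.Nondegenerate) {W : Submodule K V} (hW : W ≤ B.orthogonal W) :
    2 * finrank K W ≤ finrank K V := by
  have hle := Submodule.finrank_mono hW
  rw [finrank_orthogonal hB] at hle
  have := W.finrank_le
  omega

lemma card_le_pow_of_isotropic [Finite K] [FiniteDimensional K V]
    (hB : B.Nondegenerate) (S : Finset V) (hS : ∀ u ∈ S, ∀ v ∈ S, B u v = 0) :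
    #S ≤ Nat.card K ^ (finrank K V / 2) := by
  set W := Submodule.span K (S : Set V)
  have hW : 2 * finrank K W ≤ finrank K V :=
    two_mul_finrank_le_of_le_orthogonal hB (span_le_orthogonal_span hS)
  have : Finite W := Module.finite_of_finite K
  calc #S = Nat.card (S : Set V) := (Nat.card_eq_finsetCard S).symm
    _ ≤ Nat.card W := Nat.card_mono (Set.toFinite _) Submodule.subset_span
    _ = Nat.card K ^ finrank K W := Module.natCard_eq_pow_finrank
    _ ≤ Nat.card K ^ (finrank K V / 2) := Nat.pow_le_pow_right Nat.card_pos (by omega)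

end LinearMap.BilinForm

lemma Matrix.dotProductBilin_nondegenerate (F ι : Type*) [Field F] [Fintype ι] :
    (dotProductBilin F F : LinearMap.BilinForm F (ι → F)).Nondegenerate := by
  classical
  refine ⟨fun u hu => funext fun j => ?_, fun v hv => funext fun j => ?_⟩
  · simpa using hu (Pi.single j 1)
  · simpa using hv (Pi.single j 1)

theorem Matrix.dotProduct_append {R : Type*} [NonUnitalNonAssocSemiring R] {a b : ℕ}
    (u u' : Fin a → R) (v v' : Fin b → R) :
    Fin.append u v ⬝ᵥ Fin.append u' v' = u ⬝ᵥ u' + v ⬝ᵥ v' := by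
  simp [dotProduct, Fin.sum_univ_add]

lemma isSquare_neg_one_of_sq_add_sq_eq_zero {F : Type*} [Field F] {a b : F}
    (hab : (a, b) ≠ (0, 0)) (h : a ^ 2 + b ^ 2 = 0) : IsSquare (-1 : F) := by
  have ha : a ≠ 0 := by
    rintro rfl
    exact hab (by simpa using h)
  refine ⟨b / a, ?_⟩
  field_simp
  linear_combination -h

lemma exists_isotropic_finset_card_eq {F : Type*} [Field F] [Fintype F]
    (hF : IsSquare (-1 : F)) {m n : ℕ} (hmn : m + m ≤ n) :
    ∃ S : Finset (Fin n → F), (∀ u ∈ S, ∀ v ∈ S, u ⬝ᵥ v = 0) ∧ #S = Fintype.card F ^ m := by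
  classical
  obtain ⟨i, hi⟩ := hF
  obtain ⟨k, rfl⟩ := Nat.exists_eq_add_of_le hmn
  set f : (Fin m → F) → Fin (m + m + k) → F := fun x => Fin.append (Fin.append x (i • x)) 0
  have hf : f.Injective := fun x y hxy => funext fun j => by
    simpa [f] using congrFun hxy (Fin.castAdd k (Fin.castAdd m j))
  refine ⟨univ.image f, ?_, ?_⟩
  · simp only [mem_image, mem_univ, true_and]
    rintro _ ⟨x, rfl⟩ _ ⟨y, rfl⟩
    simp only [f, dotProduct_append, smul_dotProduct, dotProduct_smul, dotProduct_zero, smul_eq_mul]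
    linear_combination (x ⬝ᵥ y) * hi.symm
  · rw [card_image_of_injective _ hf, card_univ, Fintype.card_fun, Fintype.card_fin]

theorem stmt19_general (F : Type*) [Field F] [Fintype F]
    (a b : F) (hab : (a, b) ≠ (0, 0)) (h : a ^ 2 + b ^ 2 = 0)
    (n : ℕ) :
    (∃ S : Finset (Fin n → F),
        (∀ u ∈ S, ∀ v ∈ S, ∑ i, u i * v i = 0) ∧
        S.card = Fintype.card F ^ (n / 2)) ∧
    (∀ S : Finset (Fin n → F),
        (∀ u ∈ S, ∀ v ∈ S, ∑ i, u i * v i = 0) →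
        S.card ≤ Fintype.card F ^ (n / 2)) := by
  refine ⟨exists_isotropic_finset_card_eq (isSquare_neg_one_of_sq_add_sq_eq_zero hab h)
    (by omega), fun S hS => ?_⟩
  have hB := dotProductBilin_nondegenerate F (Fin n)
  simpa using LinearMap.BilinForm.card_le_pow_of_isotropic hB S hS

/-- if a finite field `F` with `q` elements admits `(a,b) ≠ (0,0)` with
`a² + b² = 0`, then the maximum size of a set `S ⊆ F^n` of pairwise orthogonal,
self-orthogonal vectors is exactly `q^⌊n/2⌋`. -/
theorem stmt19 (F : Type*) [Field F] [Fintype F]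
    (a b : F) (hab : (a, b) ≠ (0, 0)) (h : a ^ 2 + b ^ 2 = 0)
    (n : ℕ) (hn : 1 ≤ n) :
    (∃ S : Finset (Fin n → F),
        (∀ u ∈ S, ∀ v ∈ S, ∑ i, u i * v i = 0) ∧
        S.card = Fintype.card F ^ (n / 2)) ∧
    (∀ S : Finset (Fin n → F),
        (∀ u ∈ S, ∀ v ∈ S, ∑ i, u i * v i = 0) →
        S.card ≤ Fintype.card F ^ (n / 2)) :=
  stmt19_general F a b hab h n
end
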